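/- arXiv:1904.08699 — 10 statements merged into one kernel-verified Lean document; each statement's English description precedes it below -/
import Mathlib

section
/- Let n ≥ 1 and m be natural numbers and let p : Fin n → Fin m → ℝ with 0 ≤ p i j ≤ 1 be the outcome-0 statistics of n preparations under m binary measurements. Suppose the restriction of p to the first n−1 preparations admits a preparation-noncontextual ontological model (with the noncontextuality condition quantified over weight vectors on those n−1 preparations). Define extended statistics p' : Fin n → Fin (m+1) → ℝ by p' i j = p i j for j < m, p' i m = 1 for i < n−1, and p' (n−1) m = 0. Then p' admits a preparation-noncontextual ontological model for all n preparations and all m+1 measurements. -/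
/-- The data `(μ, ξ)` on a finite ontic space `Λ` is a preparation-noncontextual
ontological model of the statistics `p`. -/
def IsPNCModelOn {n m : ℕ} (p : Fin n → Fin m → ℝ) (Λ : Type) [Fintype Λ]
    (μ : Fin n → Λ → ℝ) (ξ : Fin m → Λ → ℝ) : Prop :=
  (∀ i l, 0 ≤ μ i l) ∧
  (∀ i, ∑ l, μ i l = 1) ∧
  (∀ j l, 0 ≤ ξ j l ∧ ξ j l ≤ 1) ∧
  (∀ i j, ∑ l, μ i l * ξ j l = p i j) ∧
  (∀ w w' : Fin n → ℝ, (∀ i, 0 ≤ w i) → (∀ i, 0 ≤ w' i) →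
    ∑ i, w i = 1 → ∑ i, w' i = 1 →
    (∀ j, ∑ i, w i * p i j = ∑ i, w' i * p i j) →
    ∀ l, ∑ i, w i * μ i l = ∑ i, w' i * μ i l)

/-- The statistics `p` admit a preparation-noncontextual ontological model on some
finite ontic state space. -/
def IsPNCModel {n m : ℕ} (p : Fin n → Fin m → ℝ) : Prop :=
  ∃ (Λ : Type) (inst : Fintype Λ) (μ : Fin n → Λ → ℝ) (ξ : Fin m → Λ → ℝ),
    @IsPNCModelOn n m p Λ inst μ ξ

/-! Adjoin to the old ontic space a fresh state `none` carrying the new preparation, on which the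
old measurements respond with the new statistics and the new measurement gives outcome `1`.
Two mixtures with equal statistics for the new measurement put the same weight on the new
preparation, hence the same total mass on the old ones; noncontextuality of the old model, rescaled
to that mass, then identifies their ontic distributions. -/

open Finset

namespace IsPNCModelOn

variable {n m : ℕ} {p : Fin n → Fin m → ℝ} {Λ : Type} [Fintype Λ]
  {μ : Fin n → Λ → ℝ} {ξ : Fin m → Λ → ℝ}

theorem sum_mul_eq_of_sum_eq (h : IsPNCModelOn p Λ μ ξ) {w w' : Fin n → ℝ}
    (hw : ∀ i, 0 ≤ w i) (hw' : ∀ i, 0 ≤ w' i) (hsum : ∑ i, w i = ∑ i, w' i)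
    (hstat : ∀ j, ∑ i, w i * p i j = ∑ i, w' i * p i j) (l : Λ) :
    ∑ i, w i * μ i l = ∑ i, w' i * μ i l := by
  set s := ∑ i, w i
  rcases (sum_nonneg fun i _ => hw i : 0 ≤ s).eq_or_lt with hs | hs
  · have hzero : ∀ v : Fin n → ℝ, (∀ i, 0 ≤ v i) → ∑ i, v i = 0 → ∑ i, v i * μ i l = 0 :=
      fun v hv hv0 => by
        simp [(sum_eq_zero_iff_of_nonneg fun i _ => hv i).1 hv0]
    rw [hzero w hw hs.symm, hzero w' hw' (hsum ▸ hs.symm)]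
  · have hnorm := h.2.2.2.2 (fun i => w i / s) (fun i => w' i / s)
      (fun i => div_nonneg (hw i) hs.le) (fun i => div_nonneg (hw' i) hs.le)
      (by rw [← sum_div, div_self hs.ne']) (by rw [← sum_div, ← hsum, div_self hs.ne'])
      (fun j => by simp only [div_mul_eq_mul_div, ← sum_div, hstat j]) l
    simp only [div_mul_eq_mul_div, ← sum_div] at hnorm
    exact (div_left_inj' hs.ne').1 hnorm

end IsPNCModelOn

section Extension

variable {k m : ℕ} {Λ : Type} [Fintype Λ]

/-- The new preparation is the last row, with statistics `r` on the old measurements; the new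
measurement is the last column, with outcome `0` certain exactly on the new preparation. -/
def extendStats (q : Fin k → Fin m → ℝ) (r : Fin m → ℝ) : Fin (k + 1) → Fin (m + 1) → ℝ :=
  Fin.lastCases (Fin.snoc r 0) fun i => Fin.snoc (q i) 1

def extendPrep (μ : Fin k → Λ → ℝ) : Fin (k + 1) → Option Λ → ℝ :=
  Fin.lastCases (fun l => l.elim 1 0) fun i l => l.elim 0 (μ i)

def extendResp (ξ : Fin m → Λ → ℝ) (r : Fin m → ℝ) : Fin (m + 1) → Option Λ → ℝ :=
  Fin.lastCases (fun l => l.elim 0 1) fun j l => l.elim (r j) (ξ j)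

variable {q : Fin k → Fin m → ℝ} {r : Fin m → ℝ}

theorem sum_mul_extendStats_last (w : Fin (k + 1) → ℝ) :
    ∑ i, w i * extendStats q r i (Fin.last m) = ∑ i : Fin k, w i.castSucc := by
  simp [Fin.sum_univ_castSucc, extendStats]

theorem sum_mul_extendStats_castSucc (w : Fin (k + 1) → ℝ) (j : Fin m) :
    ∑ i, w i * extendStats q r i j.castSucc =
      ∑ i : Fin k, w i.castSucc * q i j + w (Fin.last k) * r j := by
  simp [Fin.sum_univ_castSucc, extendStats]

theorem IsPNCModelOn.extend {μ : Fin k → Λ → ℝ} {ξ : Fin m → Λ → ℝ}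
    (h : IsPNCModelOn q Λ μ ξ) (hr : ∀ j, 0 ≤ r j ∧ r j ≤ 1) :
    IsPNCModelOn (extendStats q r) (Option Λ) (extendPrep μ) (extendResp ξ r) := by
  obtain ⟨hμ, hμ1, hξ, hqμξ, -⟩ := id h
  refine ⟨fun i l => ?_, fun i => ?_, fun j l => ?_, fun i j => ?_, ?_⟩
  · cases i using Fin.lastCases <;> cases l <;> simp [extendPrep, hμ]
  · cases i using Fin.lastCases <;> simp [Fintype.sum_option, extendPrep, hμ1]
  · cases j using Fin.lastCases <;> cases l <;> simp [extendResp, hr, hξ]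
  · cases i using Fin.lastCases <;> cases j using Fin.lastCases <;>
      simp [Fintype.sum_option, extendPrep, extendResp, extendStats, hμ1, hqμξ]
  intro w w' hw hw' hw1 hw'1 hstat l
  have hmass : ∑ i : Fin k, w i.castSucc = ∑ i : Fin k, w' i.castSucc := by
    simpa only [sum_mul_extendStats_last] using hstat (Fin.last m)
  have hlast : w (Fin.last k) = w' (Fin.last k) := by
    rw [Fin.sum_univ_castSucc] at hw1 hw'1
    linarith
  have hold : ∀ j, ∑ i : Fin k, w i.castSucc * q i j = ∑ i : Fin k, w' i.castSucc * q i j := by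
    intro j
    have := hstat j.castSucc
    rw [sum_mul_extendStats_castSucc, sum_mul_extendStats_castSucc, hlast] at this
    linarith
  cases l with
  | none => simp [Fin.sum_univ_castSucc, extendPrep, hlast]
  | some a =>
    simpa [Fin.sum_univ_castSucc, extendPrep] using
      h.sum_mul_eq_of_sum_eq (fun i => hw _) (fun i => hw' _) hmass hold a

theorem IsPNCModel.extend (h : IsPNCModel q) (hr : ∀ j, 0 ≤ r j ∧ r j ≤ 1) :
    IsPNCModel (extendStats q r) :=
  let ⟨Λ, _, μ, ξ, hmodel⟩ := h
  ⟨Option Λ, inferInstance, extendPrep μ, extendResp ξ r, hmodel.extend hr⟩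

end Extension

/-- If the first `n-1` preparations admit a preparation-noncontextual model for the `m`
known measurements, then adding an extra measurement that deterministically singles out the
last preparation still admits a preparation-noncontextual model for all `n` preparations. -/
theorem extra_measurement_allows_noncontextual_model
    (n m : ℕ) (hn : 1 ≤ n) (p : Fin n → Fin m → ℝ)
    (hp : ∀ i j, 0 ≤ p i j ∧ p i j ≤ 1)
    (hmodel : IsPNCModel (fun (i : Fin (n - 1)) (j : Fin m) =>
      p (Fin.castLE (Nat.sub_le n 1) i) j)) :
    IsPNCModel (fun (i : Fin n) (j : Fin (m + 1)) =>
      if h : (j : ℕ) < m then p i ⟨j, h⟩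
      else if (i : ℕ) < n - 1 then 1 else 0) := by
  obtain ⟨k, rfl⟩ : ∃ k, n = k + 1 := ⟨n - 1, by omega⟩
  convert IsPNCModel.extend (q := fun i : Fin k => p i.castSucc) hmodel (hp (Fin.last k)) using 1
  funext i j
  cases i using Fin.lastCases <;> cases j using Fin.lastCases <;> simp [extendStats]
end

section
/- Let p : Fin n → Fin m → ℝ with 0 ≤ p i j ≤ 1 be the outcome-0 statistics of n preparations under m binary measurements. Let Λ = (Fin m → Fin 2), fix an enumeration λ_0, …, λ_{2^m−1} of Λ, and define μ_i(λ) = ∏_{j} (if λ j = 0 then p i j else 1 − p i j). Define N = 2^m − 1 additional binary-measurement statistics q : Fin n → Fin N → ℝ by q i t = μ_i(λ_t). Then: (1) each original statistic p i j is an affine function of (q i t)_{t < N}, namely p i j = ∑_{t < N, λ_t j = 0} q i t + (if λ_{N} j = 0 then 1 − ∑_{t < N} q i t else 0); and (2) the combined statistics on Fin n → Fin (m+N) → ℝ, given by p in the first m coordinates and q in the last N, admit a preparation-noncontextual ontological model. -/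
/-!
Each `μ i` is a product of Bernoulli distributions: it is normalised and its marginal at
coordinate `j` reproduces `p i j`, so the responses `l ↦ [l j = 0]` reproduce `p`. The added
measurements are the indicators of every ontic state but the last one, `λ_N`; hence `q i`
lists the values of `μ i` off `λ_N`, and normalisation gives `μ i λ_N = 1 - ∑ t, q i t`, which
is the affine formula. Two mixtures of preparations with equal statistics therefore give
mixed distributions that agree off `λ_N` and have the same total mass, so they agree
everywhere: the model is preparation noncontextual.
-/

open Finset

section ProductDistribution

variable {ι κ R : Type*} [Fintype ι] [DecidableEq ι] [Fintype κ] [CommSemiring R]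

theorem sum_pi_prod_eq_one {f : ι → κ → R} (hf : ∀ j, ∑ x, f j x = 1) :
    ∑ l : ι → κ, ∏ j, f j (l j) = 1 := by
  rw [← Fintype.prod_sum]
  exact Fintype.prod_eq_one _ hf

theorem sum_pi_prod_mul_apply {f : ι → κ → R} (hf : ∀ j, ∑ x, f j x = 1) (j : ι) (g : κ → R) :
    ∑ l : ι → κ, (∏ j', f j' (l j')) * g (l j) = ∑ x, f j x * g x := by
  have hsplit : ∀ l : ι → κ, (∏ j', f j' (l j')) * g (l j) =
      ∏ j', f j' (l j') * if j' = j then g (l j') else 1 := by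
    intro l
    rw [prod_mul_distrib, Fintype.prod_ite_eq']
  simp_rw [hsplit]
  rw [← Fintype.prod_sum fun j' x => f j' x * if j' = j then g x else 1]
  rw [Fintype.prod_eq_single j fun j' hj' => by simp [hj', hf j']]
  simp

end ProductDistribution

theorem eq_of_sum_eq_of_forall_ne {Λ M : Type*} [Fintype Λ] [DecidableEq Λ] [AddCommGroup M]
    {ν ν' : Λ → M} (hsum : ∑ l, ν l = ∑ l, ν' l) (l₀ : Λ) (h : ∀ l ≠ l₀, ν l = ν' l) :
    ν = ν' := by
  funext l
  by_cases hl : l = l₀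
  · subst hl
    rw [← add_sum_erase _ _ (mem_univ l), ← add_sum_erase _ ν' (mem_univ l),
      sum_congr rfl fun l' hl' => h l' (ne_of_mem_erase hl')] at hsum
    exact add_right_cancel hsum
  · exact h l hl

section Bernoulli

variable {ι : Type*} [Fintype ι]

theorem prod_bernoulli_nonneg {p : ι → ℝ} (hp : ∀ j, 0 ≤ p j ∧ p j ≤ 1) (l : ι → Fin 2) :
    0 ≤ ∏ j, if l j = 0 then p j else 1 - p j :=
  prod_nonneg fun j _ => by split_ifs <;> linarith [hp j]

theorem sum_fin_two_bernoulli (p : ℝ) : ∑ x : Fin 2, (if x = 0 then p else 1 - p) = 1 := by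
  simp [Fin.sum_univ_two]

variable [DecidableEq ι]

theorem sum_prod_bernoulli (p : ι → ℝ) :
    ∑ l : ι → Fin 2, ∏ j, (if l j = 0 then p j else 1 - p j) = 1 :=
  sum_pi_prod_eq_one (f := fun j x => if x = 0 then p j else 1 - p j) fun j =>
    sum_fin_two_bernoulli (p j)

theorem sum_prod_bernoulli_mul_boole (p : ι → ℝ) (j : ι) :
    ∑ l : ι → Fin 2, (∏ j', if l j' = 0 then p j' else 1 - p j') * (if l j = 0 then 1 else 0) =
      p j := by
  rw [sum_pi_prod_mul_apply (f := fun j x => if x = 0 then p j else 1 - p j)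
    (fun j => sum_fin_two_bernoulli (p j)) j fun x => if x = 0 then 1 else 0]
  simp

end Bernoulli

theorem Fin.sum_univ_eq_sum_castLE_add {M : Type*} [AddCommMonoid M] {k : ℕ} (hk : k - 1 < k)
    (G : Fin k → M) :
    ∑ s, G s = ∑ t : Fin (k - 1), G (Fin.castLE (Nat.sub_le k 1) t) + G ⟨k - 1, hk⟩ := by
  rw [← (finCongr (by omega : k - 1 + 1 = k)).sum_comp, Fin.sum_univ_castSucc]
  rfl

theorem Fin.exists_castLE_eq_of_ne {k : ℕ} {hk : k - 1 < k} {s : Fin k} (hs : s ≠ ⟨k - 1, hk⟩) :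
    ∃ t : Fin (k - 1), Fin.castLE (Nat.sub_le k 1) t = s :=
  ⟨⟨s, by have : (s : ℕ) ≠ k - 1 := fun h => hs (Fin.ext h); omega⟩, rfl⟩

theorem isPNCModelOn_of_forall_ne_exists_indicator {Λ : Type} [Fintype Λ] [DecidableEq Λ]
    {n m : ℕ} {p : Fin n → Fin m → ℝ} {μ : Fin n → Λ → ℝ} {ξ : Fin m → Λ → ℝ}
    (hμ_nonneg : ∀ i l, 0 ≤ μ i l) (hμ_sum : ∀ i, ∑ l, μ i l = 1)
    (hξ : ∀ j l, 0 ≤ ξ j l ∧ ξ j l ≤ 1) (hp : ∀ i j, ∑ l, μ i l * ξ j l = p i j) (l₀ : Λ)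
    (hind : ∀ l ≠ l₀, ∃ j, ∀ l', ξ j l' = if l' = l then 1 else 0) :
    IsPNCModelOn p Λ μ ξ := by
  refine ⟨hμ_nonneg, hμ_sum, hξ, hp, fun w w' _ _ hw hw' hstat => ?_⟩
  have hmix_sum : ∀ v : Fin n → ℝ, ∑ i, v i = 1 → ∑ l, ∑ i, v i * μ i l = 1 := fun v hv => by
    rw [sum_comm]
    simp_rw [← mul_sum, hμ_sum, mul_one, hv]
  refine congrFun (eq_of_sum_eq_of_forall_ne ?_ l₀ fun l hl => ?_)
  · rw [hmix_sum w hw, hmix_sum w' hw']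
  · obtain ⟨j, hj⟩ := hind l hl
    simpa [← hp, hj, mul_sum] using hstat j

/-- Adding the `2^m - 1` measurements "is the ontic state `λ_t`?" (for the trivial
product-distribution model on deterministic assignments) renders the original statistics
affine functions of the new ones, and the combined statistics admit a
preparation-noncontextual model. -/
theorem product_model_measurements_noncontextual
    (n m : ℕ) (p : Fin n → Fin m → ℝ)
    (hp : ∀ i j, 0 ≤ p i j ∧ p i j ≤ 1)
    (e : Fin (2 ^ m) ≃ (Fin m → Fin 2))
    (μ : Fin n → (Fin m → Fin 2) → ℝ)
    (hμ : ∀ i l, μ i l = ∏ j, if l j = 0 then p i j else 1 - p i j)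
    (q : Fin n → Fin (2 ^ m - 1) → ℝ)
    (hq : ∀ i t, q i t = μ i (e (Fin.castLE (Nat.sub_le _ _) t))) :
    (∀ i j, p i j =
        (∑ t : Fin (2 ^ m - 1),
          if e (Fin.castLE (Nat.sub_le _ _) t) j = 0 then q i t else 0) +
        (if e ⟨2 ^ m - 1, by have : 0 < 2 ^ m := (by positivity); omega⟩ j = 0 then
          1 - ∑ t, q i t else 0)) ∧
    IsPNCModel (fun (i : Fin n) (j : Fin (m + (2 ^ m - 1))) =>
      if h : (j : ℕ) < m then p i ⟨j, h⟩
      else q i ⟨(j : ℕ) - m, by have := j.isLt; omega⟩) := by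
  have hk : 2 ^ m - 1 < 2 ^ m := Nat.sub_one_lt (by positivity)
  have hμ_sum (i) : ∑ l, μ i l = 1 := by simp only [hμ]; exact sum_prod_bernoulli (p i)
  have hμ_marginal (i j) : ∑ l, μ i l * (if l j = 0 then 1 else 0) = p i j := by
    simp only [hμ]; exact sum_prod_bernoulli_mul_boole (p i) j
  have hμ_last (i) : μ i (e ⟨2 ^ m - 1, hk⟩) = 1 - ∑ t, q i t := by
    have := Fin.sum_univ_eq_sum_castLE_add hk (μ i ∘ e)
    simp only [Function.comp_apply, e.sum_comp, hμ_sum, ← hq] at this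
    linarith
  refine ⟨fun i j => ?_, Fin m → Fin 2, inferInstance, μ,
    fun j l => if h : (j : ℕ) < m then (if l ⟨j, h⟩ = 0 then 1 else 0)
      else if l = e (Fin.castLE (Nat.sub_le (2 ^ m) 1) ⟨(j : ℕ) - m, by have := j.isLt; omega⟩)
        then 1 else 0,
    isPNCModelOn_of_forall_ne_exists_indicator (fun i l => hμ i l ▸ prod_bernoulli_nonneg (hp i) l)
      hμ_sum (fun j l => by split_ifs <;> norm_num) (fun i j => ?_) (e ⟨2 ^ m - 1, hk⟩) ?_⟩
  · rw [← hμ_marginal, ← e.sum_comp, Fin.sum_univ_eq_sum_castLE_add hk, hμ_last]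
    simp only [← hq, mul_boole]
  · split_ifs with h
    · exact hμ_marginal i _
    · simp [hq]
  · intro l hl
    obtain ⟨t, ht⟩ := Fin.exists_castLE_eq_of_ne (s := e.symm l) (by rwa [Ne, e.symm_apply_eq])
    refine ⟨Fin.natAdd m t, fun l' => ?_⟩
    rw [← e.apply_symm_apply l, ← ht]
    simp
end

section
/- Let M be a matrix over ℝ all of whose entries are 0 or 1, and suppose M has rank k. Then the number of distinct rows of M is at most 2^k. -/
/-!
The column space of `M` is spanned by `rank M` of its columns. Every other column is a linear
combination of these, so each row is determined by its entries in the chosen columns; those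
entries lie in `{0, 1}`, which leaves at most `2 ^ rank M` possible rows.
-/

open Submodule

namespace Matrix

variable {m n R : Type*}

theorem row_eq_of_eqOn_of_span_cols_eq [CommSemiring R] (M : Matrix m n R) {s : Set n}
    (hs : span R (M.col '' s) = span R (Set.range M.col)) {i i' : m}
    (h : Set.EqOn (M i) (M i') s) : M i = M i' := by
  have hproj : Set.EqOn (LinearMap.proj (R := R) (φ := fun _ : m => R) i) (LinearMap.proj i')
      (span R (M.col '' s)) :=
    LinearMap.eqOn_span' (Set.forall_mem_image.2 fun _ hj => h hj)
  rw [hs] at hproj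
  funext j
  exact hproj (subset_span ⟨j, rfl⟩)

theorem exists_finset_card_eq_rank_span_cols_eq [Finite m] [Fintype n] {K : Type*} [Field K]
    (M : Matrix m n K) :
    ∃ s : Finset n, s.card = M.rank ∧ span K (M.col '' s) = span K (Set.range M.col) := by
  obtain ⟨κ, a, ha, hspan, hli⟩ := exists_linearIndependent' K M.col
  have : Finite κ := hli.finite
  let _ := Fintype.ofFinite κ
  refine ⟨Finset.univ.map ⟨a, ha⟩, ?_, ?_⟩
  · rw [Finset.card_map, Finset.card_univ, ← finrank_span_eq_card hli, hspan,
      rank_eq_finrank_span_cols]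
  · simpa [Set.range_comp] using hspan

theorem card_image_rows_le_card_pow_rank [Fintype m] [Fintype n] {K : Type*} [Field K]
    [DecidableEq (n → K)] (M : Matrix m n K) (S : Finset K) (hS : ∀ i j, M i j ∈ S) :
    (Finset.univ.image fun i => M i).card ≤ S.card ^ M.rank := by
  classical
  obtain ⟨s, hcard, hspan⟩ := M.exists_finset_card_eq_rank_span_cols_eq
  calc (Finset.univ.image fun i => M i).card
      ≤ (Fintype.piFinset fun _ : s => S).card := by
        refine Finset.card_le_card_of_injOn (fun (u : n → K) (j : s) => u j) ?_ ?_
        · intro u hu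
          obtain ⟨i, -, rfl⟩ := Finset.mem_image.1 hu
          simp [hS]
        · simp only [Finset.coe_image, Finset.coe_univ, Set.image_univ]
          rintro _ ⟨i, rfl⟩ _ ⟨i', rfl⟩ h
          exact M.row_eq_of_eqOn_of_span_cols_eq hspan fun j hj => congrFun h ⟨j, hj⟩
    _ = S.card ^ M.rank := by simp [hcard]

end Matrix

/-- A (0,1)-valued real matrix of rank `k` has at most `2^k` distinct rows. -/
theorem binary_matrix_distinct_rows_le_two_pow_rank
    (r c k : ℕ) (M : Matrix (Fin r) (Fin c) ℝ)
    (h01 : ∀ i j, M i j = 0 ∨ M i j = 1)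
    (hrank : M.rank = k) :
    (Finset.univ.image (fun i => M i)).card ≤ 2 ^ k := by
  have h := M.card_image_rows_le_card_pow_rank {0, 1} (by simpa using h01)
  rwa [Finset.card_pair zero_ne_one, hrank] at h
end

section
/- Let k be a natural number and n = 2^k. Let Λ be a finite set, let μ_1, …, μ_n be probability distributions on Λ, and let ξ_1, …, ξ_n : Λ → ℝ with 0 ≤ ξ_i(λ) ≤ 1 satisfy ∑_λ μ_i(λ)·ξ_i(λ) = 1 for every i, and ∑_λ μ_j(λ)·ξ_i(λ) < 1 for every i ≠ j. Then the cardinality of Λ is at least k + 1. -/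
/-!
Since `ξ i ≤ 1` averages to `1` under `μ i`, it equals `1` on the support of `μ i`. Hence the
supports are pairwise non-nested: if `supp μ j ⊆ supp μ i`, then `ξ i` would also average to `1`
under `μ j`. So `i ↦ supp μ i` injects the `2 ^ k` indices into the `2 ^ |Λ| - 1` nonempty subsets
of `Λ`, and `k < |Λ|`.
-/

open Function

theorem eq_one_of_sum_mul_eq_sum {Λ : Type*} [Fintype Λ] {w ξ : Λ → ℝ}
    (hw : ∀ l, 0 ≤ w l) (hξ : ∀ l, ξ l ≤ 1) (h : ∑ l, w l * ξ l = ∑ l, w l)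
    {l : Λ} (hl : l ∈ support w) : ξ l = 1 := by
  have hterm : ∀ x ∈ Finset.univ, 0 ≤ w x * (1 - ξ x) :=
    fun x _ => mul_nonneg (hw x) (sub_nonneg.mpr (hξ x))
  have hsum : ∑ x, w x * (1 - ξ x) = 0 := by
    simp only [mul_sub, mul_one, Finset.sum_sub_distrib, h, sub_self]
  have := (Finset.sum_eq_zero_iff_of_nonneg hterm).mp hsum l (Finset.mem_univ l)
  linarith [(mul_eq_zero.mp this).resolve_left hl]

theorem sum_mul_eq_sum_of_eq_one_on_support {Λ : Type*} [Fintype Λ] {w ξ : Λ → ℝ}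
    (h : ∀ l ∈ support w, ξ l = 1) : ∑ l, w l * ξ l = ∑ l, w l := by
  refine Finset.sum_congr rfl fun l _ => ?_
  by_cases hl : w l = 0
  · simp [hl]
  · rw [h l hl, mul_one]

theorem card_lt_two_pow_of_injective_of_nonempty {ι α : Type*} [Fintype ι] [Fintype α]
    {f : ι → Set α} (hf : Injective f) (hne : ∀ i, (f i).Nonempty) :
    Fintype.card ι < 2 ^ Fintype.card α := by
  classical
  rw [← Fintype.card_set]
  exact Fintype.card_lt_of_injective_of_notMem f hf (b := ∅)
    fun ⟨i, hi⟩ => (hne i).ne_empty hi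

/-- A strengthening of Hardy's result: modelling `2^k` preparations with perfectly
distinguishing measurements (each succeeding with certainty on its own preparation and
failing with positive probability on the others) requires at least `k + 1` ontic states. -/
theorem ontic_states_lower_bound
    (k : ℕ) (Λ : Type) [Fintype Λ]
    (μ : Fin (2 ^ k) → Λ → ℝ) (ξ : Fin (2 ^ k) → Λ → ℝ)
    (hμ0 : ∀ i l, 0 ≤ μ i l) (hμ1 : ∀ i, ∑ l, μ i l = 1)
    (hξ : ∀ i l, 0 ≤ ξ i l ∧ ξ i l ≤ 1)
    (hdiag : ∀ i, ∑ l, μ i l * ξ i l = 1)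
    (hoff : ∀ i j, i ≠ j → ∑ l, μ j l * ξ i l < 1) :
    k + 1 ≤ Fintype.card Λ := by
  have hξ_one : ∀ i, ∀ l ∈ support (μ i), ξ i l = 1 := fun i _ hl =>
    eq_one_of_sum_mul_eq_sum (hμ0 i) (fun l => (hξ i l).2) (by rw [hdiag, hμ1]) hl
  have hnested : ∀ i j, support (μ j) ⊆ support (μ i) → i = j := fun i j hsub => by
    by_contra hij
    refine (hoff i j hij).ne ?_
    rw [sum_mul_eq_sum_of_eq_one_on_support fun l hl => hξ_one i l (hsub hl), hμ1]
  have hinj : Injective fun i => support (μ i) := fun i j h => hnested i j h.ge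
  have hne : ∀ i, (support (μ i)).Nonempty := fun i =>
    support_nonempty_iff.mpr fun h0 => by simpa [h0] using hμ1 i
  have hlt := card_lt_two_pow_of_injective_of_nonempty hinj hne
  rw [Fintype.card_fin, Nat.pow_lt_pow_iff_right (by norm_num)] at hlt
  exact hlt
end

section
/- Let p : Fin n → Fin m → ℝ with 0 ≤ p i j ≤ 1 be the outcome-0 statistics of n preparations under m known binary measurements. Let Λ₀ = (Fin m → Fin 2) be the set of deterministic assignments, and for each i let Δ_i be the set of probability distributions μ on Λ₀ satisfying ∑_{λ : λ j = 0} μ(λ) = p i j for every j < m. Suppose that for every pair of disjoint nonempty subsets I, J ⊆ Fin n, the convex hull of ⋃_{i ∈ I} Δ_i and the convex hull of ⋃_{j ∈ J} Δ_j are disjoint (as subsets of ℝ^{Λ₀}). Then for every m' with n ≥ m + m' + 2 and every q : Fin n → Fin m' → ℝ with 0 ≤ q i t ≤ 1, the combined statistics r : Fin n → Fin (m + m') → ℝ (given by p on the first m measurements and q on the last m') admit no preparation-noncontextual ontological model with finite ontic state space. -/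
/-!
If the statistics have a preparation-noncontextual model, the `n ≥ m + m' + 2` rows of the
statistics lie in an `(m + m')`-dimensional space, so they satisfy a nontrivial affine relation,
and preparation noncontextuality forces the ontic distributions `μ i` to satisfy the same
relation. Replacing every ontic state by the product distribution of its response probabilities
for the `m` known measurements maps `μ i` linearly into `Δ i`, so the images are still affinely
dependent, and Radon's theorem splits the preparations into two disjoint nonempty groups whose
convex hulls meet.
-/

open Finset Matrix

theorem exists_eq_smul_sub_of_sum_eq_zero {ι : Type*} [Fintype ι] {c : ι → ℝ}
    (hc : ∑ i, c i = 0) (hc0 : c ≠ 0) :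
    ∃ s : ℝ, 0 < s ∧ ∃ w w' : ι → ℝ, (∀ i, 0 ≤ w i) ∧ (∀ i, 0 ≤ w' i) ∧
      ∑ i, w i = 1 ∧ ∑ i, w' i = 1 ∧ c = s • (w - w') := by
  set s := ∑ i, (c i)⁺
  have hneg : ∑ i, (c i)⁻ = s := by
    have : ∑ i, ((c i)⁺ - (c i)⁻) = 0 := by simpa only [posPart_sub_negPart] using hc
    rw [sum_sub_distrib] at this
    linarith
  have hs : 0 < s := by
    refine (sum_nonneg fun i _ => posPart_nonneg (c i)).lt_of_ne fun hs0 => hc0 ?_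
    have hpos := (sum_eq_zero_iff_of_nonneg fun i _ => posPart_nonneg (c i)).1 hs0.symm
    have hneg0 :=
      (sum_eq_zero_iff_of_nonneg fun i _ => negPart_nonneg (c i)).1 (hneg.trans hs0.symm)
    funext i
    rw [← posPart_sub_negPart (c i), hpos i (mem_univ i), hneg0 i (mem_univ i), sub_zero,
      Pi.zero_apply]
  refine ⟨s, hs, fun i => (c i)⁺ / s, fun i => (c i)⁻ / s, fun i => by positivity,
    fun i => by positivity, ?_, ?_, ?_⟩
  · rw [← sum_div, div_self hs.ne']
  · rw [← sum_div, hneg, div_self hs.ne']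
  · funext i
    simp [← sub_div, mul_div_cancel₀ _ hs.ne']

theorem not_affineIndependent_of_finrank_add_one_lt {ι E : Type*} [Fintype ι] [AddCommGroup E]
    [Module ℝ E] [FiniteDimensional ℝ E] (v : ι → E)
    (h : Module.finrank ℝ E + 1 < Fintype.card ι) : ¬ AffineIndependent ℝ v := fun hv => by
  have := hv.card_le_finrank_succ
  have := Submodule.finrank_le (vectorSpan ℝ (Set.range v))
  omega

theorem exists_not_disjoint_convexHull_biUnion {ι E : Type*} [Fintype ι] [AddCommGroup E]
    [Module ℝ E] {z : ι → E} {Δ : ι → Set E} (hz : ∀ i, z i ∈ Δ i)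
    (h : ¬ AffineIndependent ℝ z) :
    ∃ I J : Finset ι, I.Nonempty ∧ J.Nonempty ∧ Disjoint I J ∧
      ¬ Disjoint (convexHull ℝ (⋃ i ∈ I, Δ i)) (convexHull ℝ (⋃ j ∈ J, Δ j)) := by
  classical
  obtain ⟨I, x, hxI, hxJ⟩ := Convex.radon_partition h
  rw [← Set.coe_toFinset I] at hxI hxJ
  rw [← Finset.coe_compl] at hxJ
  have image_subset : ∀ S : Finset ι, z '' S ⊆ ⋃ i ∈ S, Δ i := by
    rintro S _ ⟨i, hi, rfl⟩
    exact Set.mem_biUnion hi (hz i)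
  have nonempty_of_mem : ∀ S : Finset ι, x ∈ convexHull ℝ (z '' S) → S.Nonempty :=
    fun S hx => Finset.coe_nonempty.1 (Set.image_nonempty.1 (convexHull_nonempty_iff.1 ⟨x, hx⟩))
  exact ⟨I.toFinset, I.toFinsetᶜ, nonempty_of_mem _ hxI, nonempty_of_mem _ hxJ,
    disjoint_compl_right, Set.not_disjoint_iff.2 ⟨x, convexHull_mono (image_subset _) hxI,
      convexHull_mono (image_subset _) hxJ⟩⟩

section Assignments

variable {ι : Type*} [Fintype ι]

def productDist (g : ι → ℝ) (a : ι → Fin 2) : ℝ :=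
  ∏ j, if a j = 0 then g j else 1 - g j

def marginalPolytope [DecidableEq ι] (g : ι → ℝ) : Set ((ι → Fin 2) → ℝ) :=
  {ν | (∀ a, 0 ≤ ν a) ∧ ∑ a, ν a = 1 ∧
    ∀ j, ∑ a ∈ univ.filter (fun a : ι → Fin 2 => a j = 0), ν a = g j}

theorem productDist_nonneg {g : ι → ℝ} (hg : ∀ j, 0 ≤ g j ∧ g j ≤ 1) (a : ι → Fin 2) :
    0 ≤ productDist g a :=
  prod_nonneg fun j _ => by split_ifs <;> linarith [hg j]

theorem sum_productDist [DecidableEq ι] (g : ι → ℝ) : ∑ a, productDist g a = 1 := by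
  unfold productDist
  rw [← Fintype.prod_sum fun j (b : Fin 2) => if b = 0 then g j else 1 - g j]
  simp [Fin.sum_univ_two]

theorem sum_filter_productDist [DecidableEq ι] (g : ι → ℝ) (j₀ : ι) :
    ∑ a ∈ univ.filter (fun a : ι → Fin 2 => a j₀ = 0), productDist g a = g j₀ := by
  have hfilter : univ.filter (fun a : ι → Fin 2 => a j₀ = 0) =
      Fintype.piFinset fun j => if j = j₀ then {0} else univ := by
    ext a
    simp only [mem_filter, mem_univ, true_and, Fintype.mem_piFinset]
    refine ⟨fun ha j => ?_, fun ha => by simpa using ha j₀⟩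
    split_ifs with hj
    · simp [hj, ha]
    · exact mem_univ _
  unfold productDist
  rw [hfilter, ← prod_univ_sum _ fun j (b : Fin 2) => if b = 0 then g j else 1 - g j]
  have hfactor : ∀ j, ∑ b ∈ (if j = j₀ then {0} else univ : Finset (Fin 2)),
      (if b = 0 then g j else 1 - g j) = if j = j₀ then g j else 1 := by
    intro j
    split_ifs <;> simp [Fin.sum_univ_two]
  simp [hfactor]

def assignmentKernel {Λ : Type*} (ξ : ι → Λ → ℝ) : Matrix (ι → Fin 2) Λ ℝ :=
  of fun a l => productDist (fun j => ξ j l) a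

theorem assignmentKernel_mulVec_mem_marginalPolytope [DecidableEq ι] {Λ : Type*} [Fintype Λ]
    {ξ : ι → Λ → ℝ} (hξ : ∀ j l, 0 ≤ ξ j l ∧ ξ j l ≤ 1) {ν : Λ → ℝ} (hν : ∀ l, 0 ≤ ν l)
    (hν1 : ∑ l, ν l = 1) :
    assignmentKernel ξ *ᵥ ν ∈ marginalPolytope fun j => ∑ l, ν l * ξ j l := by
  simp only [marginalPolytope, Set.mem_ofPred_eq, mulVec, dotProduct, assignmentKernel, of_apply]
  refine ⟨fun a => sum_nonneg fun l _ => mul_nonneg (productDist_nonneg (hξ · l) a) (hν l),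
    ?_, fun j => ?_⟩
  · rw [sum_comm]
    simp_rw [← sum_mul, sum_productDist, one_mul, hν1]
  · rw [sum_comm]
    simp_rw [← sum_mul, sum_filter_productDist, mul_comm]

end Assignments

theorem IsPNCModelOn.sum_smul_eq_zero {n m : ℕ} {p : Fin n → Fin m → ℝ} {Λ : Type} [Fintype Λ]
    {μ : Fin n → Λ → ℝ} {ξ : Fin m → Λ → ℝ} (h : IsPNCModelOn p Λ μ ξ) {c : Fin n → ℝ}
    (hc : ∑ i, c i = 0) (hcp : ∑ i, c i • p i = 0) : ∑ i, c i • μ i = 0 := by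
  obtain ⟨-, -, -, -, hpnc⟩ := h
  rcases eq_or_ne c 0 with rfl | hc0
  · simp
  obtain ⟨s, hs, w, w', hw, hw', hw1, hw'1, rfl⟩ := exists_eq_smul_sub_of_sum_eq_zero hc hc0
  have expand : ∀ {V : Type} [AddCommGroup V] [Module ℝ V] (v : Fin n → V),
      ∑ i, (s • (w - w')) i • v i = s • (∑ i, w i • v i - ∑ i, w' i • v i) := by
    intro V _ _ v
    simp only [Pi.smul_apply, Pi.sub_apply, smul_eq_mul, mul_smul, sub_smul, smul_sub,
      sum_sub_distrib, smul_sum]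
  rw [expand] at hcp ⊢
  have hpw : ∑ i, w i • p i = ∑ i, w' i • p i :=
    sub_eq_zero.1 ((smul_eq_zero.1 hcp).resolve_left hs.ne')
  have hμw : ∑ i, w i • μ i = ∑ i, w' i • μ i := funext fun l => by
    simpa using hpnc w w' hw hw' hw1 hw'1 (fun j => by simpa using congrFun hpw j) l
  rw [hμw, sub_self, smul_zero]

theorem IsPNCModelOn.not_affineIndependent {n m : ℕ} {p : Fin n → Fin m → ℝ} {Λ : Type}
    [Fintype Λ] {μ : Fin n → Λ → ℝ} {ξ : Fin m → Λ → ℝ} (h : IsPNCModelOn p Λ μ ξ)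
    (hp : ¬ AffineIndependent ℝ p) : ¬ AffineIndependent ℝ μ := by
  simp only [affineIndependent_iff_of_fintype] at hp ⊢
  refine fun hμ => hp fun c hc hcp => hμ c hc ?_
  rw [weightedVSub_eq_linear_combination _ hc] at hcp ⊢
  exact h.sum_smul_eq_zero hc hcp

/-- Theorem 7 of the paper: if the assignment polytopes `Δ_i` (distributions over
deterministic assignments reproducing the known statistics) are such that the convex hulls
of the unions over any two disjoint nonempty subsets of preparations are disjoint, then no
assignment of statistics to `m'` unknown measurements (with `n ≥ m + m' + 2`) admits a
preparation-noncontextual ontological model. -/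
theorem algorithm_certifies_contextuality
    (n m : ℕ) (p : Fin n → Fin m → ℝ)
    (Δ : Fin n → Set ((Fin m → Fin 2) → ℝ))
    (hΔ : ∀ i, Δ i = {μ : (Fin m → Fin 2) → ℝ |
      (∀ l, 0 ≤ μ l) ∧ (∑ l, μ l = 1) ∧
      ∀ j : Fin m, ∑ l ∈ Finset.univ.filter (fun l : Fin m → Fin 2 => l j = 0), μ l = p i j})
    (hsep : ∀ I J : Finset (Fin n), I.Nonempty → J.Nonempty → Disjoint I J →
      Disjoint (convexHull ℝ (⋃ i ∈ I, Δ i)) (convexHull ℝ (⋃ j ∈ J, Δ j)))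
    (m' : ℕ) (hm' : m + m' + 2 ≤ n)
    (q : Fin n → Fin m' → ℝ) :
    ¬ IsPNCModel (fun (i : Fin n) (j : Fin (m + m')) =>
      if h : (j : ℕ) < m then p i ⟨j, h⟩
      else q i ⟨(j : ℕ) - m, by have := j.isLt; omega⟩) := by
  rintro ⟨Λ, _, μ, ξ, hmodel⟩
  set K := assignmentKernel fun j : Fin m => ξ (Fin.castAdd m' j)
  have hdep : ¬ AffineIndependent ℝ fun i => K *ᵥ μ i := fun h =>
    hmodel.not_affineIndependent
      (not_affineIndependent_of_finrank_add_one_lt _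
        (by simp only [Module.finrank_fin_fun, Fintype.card_fin]; omega))
      (h.of_comp K.mulVecLin.toAffineMap)
  obtain ⟨hμ, hμ1, hξ, hstat, -⟩ := hmodel
  have hmem : ∀ i, K *ᵥ μ i ∈ Δ i := fun i => by
    have hmarg : (fun j => ∑ l, μ i l * ξ (Fin.castAdd m' j) l) = p i :=
      funext fun j => by simpa using hstat i (Fin.castAdd m' j)
    rw [hΔ, ← hmarg]
    exact assignmentKernel_mulVec_mem_marginalPolytope (fun j => hξ _) (hμ i) (hμ1 i)
  obtain ⟨I, J, hI, hJ, hIJ, hmeet⟩ := exists_not_disjoint_convexHull_biUnion hmem hdep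
  exact hmeet (hsep I J hI hJ hIJ)
end

section
/- Let r : Fin n → Fin (m + m') → ℝ with 0 ≤ r i j ≤ 1 be statistics for n preparations under m + m' binary measurements, the first m of which are 'known'. Suppose (Λ, μ, ξ) is a preparation-noncontextual ontological model for r in which every response function is deterministic, i.e. ξ_j(λ) ∈ {0,1} for all j and λ. Define the coarse-grained distributions μ'_i on Λ₀ = (Fin m → Fin 2) by μ'_i(λ') = ∑_{λ ∈ Λ : ∀ j < m, ξ_j(λ) = (if λ' j = 0 then 1 else 0)} μ_i(λ). Then: (1) each μ'_i is a probability distribution on Λ₀ satisfying ∑_{λ' : λ' j = 0} μ'_i(λ') = r i j for every j < m; and (2) for all weight vectors q, q' : Fin n → ℝ with nonnegative entries summing to 1, if ∑_i q i · r i j = ∑_i q' i · r i j for every j < m + m', then ∑_i q i · μ'_i = ∑_i q' i · μ'_i. -/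
open Finset

section CoarseGrain

variable {Λ V : Type*} [Fintype Λ] [DecidableEq V]

def coarseGrain (a : Λ → V) (μ : Λ → ℝ) (v : V) : ℝ :=
  ∑ l ∈ univ.filter (fun l => a l = v), μ l

lemma coarseGrain_nonneg (a : Λ → V) {μ : Λ → ℝ} (hμ : ∀ l, 0 ≤ μ l) (v : V) :
    0 ≤ coarseGrain a μ v :=
  sum_nonneg fun l _ => hμ l

lemma sum_coarseGrain_eq_sum_filter (a : Λ → V) (μ : Λ → ℝ) (Q : Finset V) :
    ∑ v ∈ Q, coarseGrain a μ v = ∑ l ∈ univ.filter (fun l => a l ∈ Q), μ l :=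
  sum_fiberwise_eq_sum_filter _ _ _ _

lemma sum_coarseGrain [Fintype V] (a : Λ → V) (μ : Λ → ℝ) :
    ∑ v, coarseGrain a μ v = ∑ l, μ l :=
  sum_fiberwise _ _ _

lemma sum_mul_coarseGrain {ι : Type*} [Fintype ι] (a : Λ → V) (w : ι → ℝ) (μ : ι → Λ → ℝ)
    (v : V) :
    ∑ i, w i * coarseGrain a (μ i) v = coarseGrain a (fun l => ∑ i, w i * μ i l) v := by
  simp only [coarseGrain, mul_sum]
  exact sum_comm

end CoarseGrain

section Deterministic

variable {J Λ : Type*}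

/-- Outcome `0` of measurement `j` is the one with response `ξ j l = 1`, matching the encoding
of the coarse-grained model. -/
noncomputable def outcomeVector (ξ : J → Λ → ℝ) (l : Λ) : J → Fin 2 :=
  fun j => if ξ j l = 1 then 0 else 1

variable {ξ : J → Λ → ℝ}

lemma response_eq_ite_outcomeVector (hdet : ∀ j l, ξ j l = 0 ∨ ξ j l = 1) (j : J) (l : Λ) :
    ξ j l = if outcomeVector ξ l j = 0 then 1 else 0 := by
  rcases hdet j l with h | h <;> simp [outcomeVector, h]

lemma outcomeVector_eq_iff (hdet : ∀ j l, ξ j l = 0 ∨ ξ j l = 1) (l : Λ) (v : J → Fin 2) :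
    outcomeVector ξ l = v ↔ ∀ j, ξ j l = if v j = 0 then 1 else 0 := by
  rw [funext_iff]
  refine forall_congr' fun j => ?_
  rw [response_eq_ite_outcomeVector hdet j l]
  rcases Fin.exists_fin_two.mp ⟨outcomeVector ξ l j, rfl⟩ with h | h <;>
    rcases Fin.exists_fin_two.mp ⟨v j, rfl⟩ with hv | hv <;> simp [h, hv]

lemma sum_mul_response_eq_coarseGrain_outcome_zero [Fintype Λ]
    (hdet : ∀ j l, ξ j l = 0 ∨ ξ j l = 1) (μ : Λ → ℝ) (j : J) :
    ∑ l, μ l * ξ j l = ∑ l ∈ univ.filter (fun l => outcomeVector ξ l j = 0), μ l := by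
  simp only [response_eq_ite_outcomeVector hdet j, mul_ite, mul_one, mul_zero, sum_ite,
    sum_const_zero, add_zero]

end Deterministic

theorem coarse_graining_deterministic_model_general
    (n m m' : ℕ) (r : Fin n → Fin (m + m') → ℝ)
    (Λ : Type) [Fintype Λ]
    (μ : Fin n → Λ → ℝ) (ξ : Fin (m + m') → Λ → ℝ)
    (hmodel : IsPNCModelOn r Λ μ ξ)
    (hdet : ∀ j l, ξ j l = 0 ∨ ξ j l = 1)
    (μ' : Fin n → (Fin m → Fin 2) → ℝ)
    (hμ' : ∀ i (v : Fin m → Fin 2), μ' i v =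
      ∑ l ∈ Finset.univ.filter (fun l : Λ =>
        ∀ j : Fin m, ξ (Fin.castAdd m' j) l = if v j = 0 then 1 else 0), μ i l) :
    ((∀ i v, 0 ≤ μ' i v) ∧
     (∀ i, ∑ v, μ' i v = 1) ∧
     (∀ i (j : Fin m),
        ∑ v ∈ Finset.univ.filter (fun v : Fin m → Fin 2 => v j = 0), μ' i v
          = r i (Fin.castAdd m' j))) ∧
    (∀ w w' : Fin n → ℝ, (∀ i, 0 ≤ w i) → (∀ i, 0 ≤ w' i) →
      ∑ i, w i = 1 → ∑ i, w' i = 1 →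
      (∀ j, ∑ i, w i * r i j = ∑ i, w' i * r i j) →
      ∀ v, ∑ i, w i * μ' i v = ∑ i, w' i * μ' i v) := by
  obtain ⟨hμ_nonneg, hμ_sum, -, hrep, hnc⟩ := hmodel
  set ξknown : Fin m → Λ → ℝ := fun j => ξ (Fin.castAdd m' j)
  have hdet_known : ∀ j l, ξknown j l = 0 ∨ ξknown j l = 1 := fun j => hdet _
  have hμ'_eq : μ' = fun i => coarseGrain (outcomeVector ξknown) (μ i) := by
    ext i v
    simp only [hμ', coarseGrain, outcomeVector_eq_iff hdet_known, ξknown]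
  subst hμ'_eq
  refine ⟨⟨fun i => coarseGrain_nonneg _ (hμ_nonneg i), fun i => ?_, fun i j => ?_⟩, ?_⟩
  · rw [sum_coarseGrain, hμ_sum]
  · rw [sum_coarseGrain_eq_sum_filter, ← hrep,
      sum_mul_response_eq_coarseGrain_outcome_zero (ξ := ξknown) hdet_known]
    simp only [mem_filter, mem_univ, true_and]
  · intro w w' hw hw' hw_sum hw'_sum hwr v
    simp only [sum_mul_coarseGrain]
    congr 1
    exact funext (hnc w w' hw hw' hw_sum hw'_sum hwr)

/-- Coarse-graining a deterministic preparation-noncontextual ontological model over the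
assignments to the `m` known measurements yields distributions on deterministic
assignments that reproduce the known statistics and still satisfy the noncontextuality
condition with respect to all `m + m'` measurements. -/
theorem coarse_graining_deterministic_model
    (n m m' : ℕ) (r : Fin n → Fin (m + m') → ℝ)
    (hr : ∀ i j, 0 ≤ r i j ∧ r i j ≤ 1)
    (Λ : Type) [Fintype Λ]
    (μ : Fin n → Λ → ℝ) (ξ : Fin (m + m') → Λ → ℝ)
    (hmodel : IsPNCModelOn r Λ μ ξ)
    (hdet : ∀ j l, ξ j l = 0 ∨ ξ j l = 1)
    (μ' : Fin n → (Fin m → Fin 2) → ℝ)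
    (hμ' : ∀ i (v : Fin m → Fin 2), μ' i v =
      ∑ l ∈ Finset.univ.filter (fun l : Λ =>
        ∀ j : Fin m, ξ (Fin.castAdd m' j) l = if v j = 0 then 1 else 0), μ i l) :
    ((∀ i v, 0 ≤ μ' i v) ∧
     (∀ i, ∑ v, μ' i v = 1) ∧
     (∀ i (j : Fin m),
        ∑ v ∈ Finset.univ.filter (fun v : Fin m → Fin 2 => v j = 0), μ' i v
          = r i (Fin.castAdd m' j))) ∧
    (∀ w w' : Fin n → ℝ, (∀ i, 0 ≤ w i) → (∀ i, 0 ≤ w' i) →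
      ∑ i, w i = 1 → ∑ i, w' i = 1 →
      (∀ j, ∑ i, w i * r i j = ∑ i, w' i * r i j) →
      ∀ v, ∑ i, w i * μ' i v = ∑ i, w' i * μ' i v) :=
  coarse_graining_deterministic_model_general n m m' r Λ μ ξ hmodel hdet μ' hμ'
end

section
/- Let Λ be a finite set, let μ_1, …, μ_n be probability distributions on Λ, let ξ_1, …, ξ_n : Λ → ℝ with 0 ≤ ξ_i(λ) ≤ 1, and let ε ≥ 0 and η > 0 satisfy ε < η²/4. Suppose ∑_λ μ_i(λ)·(1 − ξ_i(λ)) ≤ ε for every i, and ∑_λ μ_j(λ)·(1 − ξ_i(λ)) ≥ η for every i ≠ j. Then the sets S_i := {λ ∈ Λ : 1 − ξ_i(λ) < η/2} are pairwise distinct: S_i ≠ S_j whenever i ≠ j. -/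
/-!
If `S_i = S_j`, Markov's inequality applied to `∑ μ_i (1 - ξ_i) ≤ ε` shows that `μ_i` puts mass at
most `2ε/η < η/2` outside `S_i`. On `S_i = S_j` the noise `1 - ξ_j` is below `η/2`, and elsewhere it
is at most `1`, so `∑ μ_i (1 - ξ_j) < η/2 + η/2 = η`, contradicting the off-diagonal bound.
-/

open Finset

namespace Finset

variable {ι R : Type*} [CommSemiring R] [PartialOrder R] [IsOrderedRing R]
  {s : Finset ι} {w f : ι → R}

theorem mul_sum_filter_le_le_sum_mul (hw : ∀ i ∈ s, 0 ≤ w i) (hf : ∀ i ∈ s, 0 ≤ f i) (t : R)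
    [DecidablePred fun i => t ≤ f i] :
    t * ∑ i ∈ s with t ≤ f i, w i ≤ ∑ i ∈ s, w i * f i :=
  calc t * ∑ i ∈ s with t ≤ f i, w i
      ≤ ∑ i ∈ s with t ≤ f i, w i * f i := by
        rw [mul_sum]
        refine sum_le_sum fun i hi => ?_
        rw [mem_filter] at hi
        rw [mul_comm t]
        exact mul_le_mul_of_nonneg_left hi.2 (hw i hi.1)
    _ ≤ ∑ i ∈ s, w i * f i :=
        sum_le_sum_of_subset_of_nonneg (filter_subset _ _)
          fun i hi _ => mul_nonneg (hw i hi) (hf i hi)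

theorem sum_mul_le_mul_sum_add_sum_filter (p : ι → Prop) [DecidablePred p]
    (hw : ∀ i ∈ s, 0 ≤ w i) (hf : ∀ i ∈ s, f i ≤ 1) {c : R} (hc : 0 ≤ c)
    (hfc : ∀ i ∈ s, ¬ p i → f i ≤ c) :
    ∑ i ∈ s, w i * f i ≤ c * ∑ i ∈ s, w i + ∑ i ∈ s with p i, w i := by
  rw [← sum_filter_add_sum_filter_not s p, add_comm]
  gcongr ?_ + ?_
  · calc ∑ i ∈ s with ¬ p i, w i * f i
        ≤ ∑ i ∈ s with ¬ p i, c * w i := by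
          refine sum_le_sum fun i hi => ?_
          rw [mem_filter] at hi
          rw [mul_comm c]
          exact mul_le_mul_of_nonneg_left (hfc i hi.1 hi.2) (hw i hi.1)
      _ ≤ c * ∑ i ∈ s, w i := by
          rw [← mul_sum]
          exact mul_le_mul_of_nonneg_left
            (sum_le_sum_of_subset_of_nonneg (filter_subset _ _) fun i hi _ => hw i hi) hc
  · refine sum_le_sum fun i hi => ?_
    rw [mem_filter] at hi
    exact mul_le_of_le_one_right (hw i hi.1) (hf i hi.1)

end Finset

theorem noisy_certainty_sets_pairwise_distinct_general
    (n : ℕ) (Λ : Type) [Fintype Λ]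
    (μ : Fin n → Λ → ℝ) (ξ : Fin n → Λ → ℝ)
    (hμ0 : ∀ i l, 0 ≤ μ i l) (hμ1 : ∀ i, ∑ l, μ i l = 1)
    (hξ : ∀ i l, 0 ≤ ξ i l ∧ ξ i l ≤ 1)
    (ε η : ℝ) (hη : 0 < η) (hεη : ε < η ^ 2 / 4)
    (hdiag : ∀ i, ∑ l, μ i l * (1 - ξ i l) ≤ ε)
    (hoff : ∀ i j, i ≠ j → η ≤ ∑ l, μ j l * (1 - ξ i l)) :
    ∀ i j : Fin n, i ≠ j →
      {l : Λ | 1 - ξ i l < η / 2} ≠ {l : Λ | 1 - ξ j l < η / 2} := by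
  intro i j hij hS
  set m := ∑ l with η / 2 ≤ 1 - ξ i l, μ i l
  have hmarkov : η / 2 * m ≤ ε :=
    (mul_sum_filter_le_le_sum_mul (fun l _ => hμ0 i l)
      (fun l _ => sub_nonneg.2 (hξ i l).2) _).trans (hdiag i)
  have hsplit : ∑ l, μ i l * (1 - ξ j l) ≤ η / 2 * ∑ l, μ i l + m :=
    sum_mul_le_mul_sum_add_sum_filter _ (fun l _ => hμ0 i l)
      (fun l _ => by linarith [(hξ j l).1]) (by positivity) fun l _ hl => by
        have hl : l ∈ {l : Λ | 1 - ξ i l < η / 2} := not_le.1 hl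
        rw [hS] at hl
        exact hl.le
  rw [hμ1 i, mul_one] at hsplit
  have hm : m < η / 2 := lt_of_mul_lt_mul_left (by linarith) (half_pos hη).le
  linarith [hoff j i hij.symm]

/-- In the noise-tolerant setting with `ε < η²/4`, the sets
`S_i = {λ : 1 - ξ_i(λ) < η/2}` are pairwise distinct. -/
theorem noisy_certainty_sets_pairwise_distinct
    (n : ℕ) (Λ : Type) [Fintype Λ]
    (μ : Fin n → Λ → ℝ) (ξ : Fin n → Λ → ℝ)
    (hμ0 : ∀ i l, 0 ≤ μ i l) (hμ1 : ∀ i, ∑ l, μ i l = 1)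
    (hξ : ∀ i l, 0 ≤ ξ i l ∧ ξ i l ≤ 1)
    (ε η : ℝ) (hε : 0 ≤ ε) (hη : 0 < η) (hεη : ε < η ^ 2 / 4)
    (hdiag : ∀ i, ∑ l, μ i l * (1 - ξ i l) ≤ ε)
    (hoff : ∀ i j, i ≠ j → η ≤ ∑ l, μ j l * (1 - ξ i l)) :
    ∀ i j : Fin n, i ≠ j →
      {l : Λ | 1 - ξ i l < η / 2} ≠ {l : Λ | 1 - ξ j l < η / 2} :=
  noisy_certainty_sets_pairwise_distinct_general n Λ μ ξ hμ0 hμ1 hξ ε η hη hεη hdiag hoff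
end

section
/- Let θ_n = 2π(n/5 + 1/20) for n ∈ {0,1,2,3,4}, and set x_n = sin θ_n, y_n = cos θ_n. Then the determinant of the 4×4 matrix with rows (x_1, y_1, x_1 + y_1 − 1, 1), (x_2, y_2, −x_2 + y_2 + 1, 1), (x_4, y_4, x_4 − y_4 + 1, 1), (x_3, y_3, −x_3 − y_3 − 1, 1) equals (1/4)(5√5 − √(10(√5 + 5)) + 5), which is strictly positive. -/
/-!
Measuring the angles from the vertex `θ 1 = π / 2`, the other three vertices sit at `2π/5`,
`4π/5` and `6π/5` further on, so every entry of the matrix is a polynomial in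
`c = cos (π / 5) = (1 + √5) / 4` and `s = sin (π / 5)`. The determinant factors as
`4 s (1 + c) (2 s c - (1 - c) (1 + 2 c))`; reducing with `s² = (5 - √5) / 8` and recognising
`√(10 (√5 + 5)) = (2 √5 + 10) s` gives the closed form. Positivity is the elementary bound
`10 (√5 + 5) < (5 √5 + 5)²`.
-/

open Real

lemma det_pentagonMatrix_of_vertices {R : Type*} [CommRing R] (x y : ℕ → R) (c s : R)
    (hx1 : x 1 = 1) (hy1 : y 1 = 0) (hx2 : x 2 = 2 * c ^ 2 - 1) (hy2 : y 2 = -(2 * s * c))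
    (hx3 : x 3 = -c) (hy3 : y 3 = -s) (hx4 : x 4 = -c) (hy4 : y 4 = s) :
    Matrix.det !![x 1, y 1, x 1 + y 1 - 1, 1;
                  x 2, y 2, -x 2 + y 2 + 1, 1;
                  x 4, y 4, x 4 - y 4 + 1, 1;
                  x 3, y 3, -x 3 - y 3 - 1, 1]
      = 4 * s * (1 + c) * (2 * s * c - (1 - c) * (1 + 2 * c)) := by
  rw [hx1, hy1, hx2, hy2, hx3, hy3, hx4, hy4]
  simp [Matrix.det_succ_row_zero, Fin.sum_univ_succ, Fin.succAbove]
  ring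

lemma sq_sqrt_five : √5 ^ 2 = 5 := sq_sqrt (by norm_num)

lemma sin_sq_pi_div_five : sin (π / 5) ^ 2 = (5 - √5) / 8 := by
  rw [sin_sq, cos_pi_div_five]
  linear_combination (-1 / 16 : ℝ) * sq_sqrt_five

lemma sqrt_ten_mul_sqrt_five_add_five :
    √(10 * (√5 + 5)) = (2 * √5 + 10) * sin (π / 5) := by
  have : 0 ≤ sin (π / 5) := sin_nonneg_of_nonneg_of_le_pi (by positivity) (by linarith [pi_pos])
  rw [← sqrt_sq (by positivity : 0 ≤ (2 * √5 + 10) * sin (π / 5)), mul_pow, sin_sq_pi_div_five]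
  congr 1
  linear_combination (√5 + 5) / 2 * sq_sqrt_five

lemma sqrt_ten_mul_sqrt_five_add_five_lt : √(10 * (√5 + 5)) < 5 * √5 + 5 := by
  rw [sqrt_lt' (by positivity)]
  nlinarith [sqrt_nonneg 5, sq_sqrt_five]

lemma pentagon_det_at_pi_div_five :
    4 * sin (π / 5) * (1 + cos (π / 5)) * (2 * sin (π / 5) * cos (π / 5)
        - (1 - cos (π / 5)) * (1 + 2 * cos (π / 5)))
      = 1 / 4 * (5 * √5 - √(10 * (√5 + 5)) + 5) := by
  rw [sqrt_ten_mul_sqrt_five_add_five, cos_pi_div_five]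
  linear_combination (1 + √5) * (5 + √5) / 2 * sin_sq_pi_div_five
    + ((5 + √5) * sin (π / 5) / 8 - (1 + √5) / 16) * sq_sqrt_five

/-- The value `V_α` for the case `(a, γ, α, b) = (1, 2, 4, 3)` of the pentagon
construction equals `(1/4)(5√5 − √(10(√5 + 5)) + 5) > 0`. -/
theorem pentagon_Valpha_first_case
    (θ x y : ℕ → ℝ)
    (hθ : ∀ n, θ n = 2 * Real.pi * ((n : ℝ) / 5 + 1 / 20))
    (hx : ∀ n, x n = Real.sin (θ n))
    (hy : ∀ n, y n = Real.cos (θ n)) :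
    Matrix.det !![x 1, y 1, x 1 + y 1 - 1, 1;
                  x 2, y 2, -x 2 + y 2 + 1, 1;
                  x 4, y 4, x 4 - y 4 + 1, 1;
                  x 3, y 3, -x 3 - y 3 - 1, 1]
      = 1 / 4 * (5 * Real.sqrt 5 - Real.sqrt (10 * (Real.sqrt 5 + 5)) + 5) ∧
    0 < 1 / 4 * (5 * Real.sqrt 5 - Real.sqrt (10 * (Real.sqrt 5 + 5)) + 5) := by
  have hθ1 : θ 1 = π / 2 := by rw [hθ]; push_cast; ring
  have hθ2 : θ 2 = 2 * (π / 5) + π / 2 := by rw [hθ]; push_cast; ring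
  have hθ3 : θ 3 = (π - π / 5) + π / 2 := by rw [hθ]; push_cast; ring
  have hθ4 : θ 4 = (π / 5 + π) + π / 2 := by rw [hθ]; push_cast; ring
  refine ⟨?_, by linarith [sqrt_ten_mul_sqrt_five_add_five_lt]⟩
  rw [← pentagon_det_at_pi_div_five]
  apply det_pentagonMatrix_of_vertices
  · rw [hx, hθ1, sin_pi_div_two]
  · rw [hy, hθ1, cos_pi_div_two]
  · rw [hx, hθ2, sin_add_pi_div_two, cos_two_mul]
  · rw [hy, hθ2, cos_add_pi_div_two, sin_two_mul]
  · rw [hx, hθ3, sin_add_pi_div_two, cos_pi_sub]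
  · rw [hy, hθ3, cos_add_pi_div_two, sin_pi_sub]
  · rw [hx, hθ4, sin_add_pi_div_two, cos_add_pi]
  · rw [hy, hθ4, cos_add_pi_div_two, sin_add_pi, neg_neg]
end

section
/- Let θ_n = 2π(n/5 + 1/20) for n ∈ {0,1,2,3,4}, and set x_n = sin θ_n, y_n = cos θ_n. Then the determinant of the 4×4 matrix with rows (x_1, y_1, x_1 + y_1 − 1, 1), (x_2, y_2, −x_2 + y_2 + 1, 1), (x_0, y_0, x_0 − y_0 + 1, 1), (x_3, y_3, −x_3 − y_3 − 1, 1) equals (1/4)(5√5 − 2√(5(2√5 + 5)) + 5), which is strictly positive. -/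
/-!
The angles are `θ_n = π/10 + 2πn/5`, so with `s = sin (π/10)` and `c = cos (π/10)` the four
points are `(1, 0)`, `(s, -c)`, `(s, c)` and `(2s² - 1, -2sc)`, and the determinant collapses to
`4c(1 - s)((1 + 2s)c - (1 + s))`. From `cos (π/5) = (1 + √5)/4` one gets `s = (√5 - 1)/4` and
`c² = (5 + √5)/8`, whence `√(5(2√5 + 5)) = (5 + √5)c`, which turns the determinant into the
stated closed form. Its positivity is `2√(5(2√5 + 5)) < 5√5 + 5`, checked by squaring.
-/

open Real

lemma det_pentagon_matrix {R : Type*} [CommRing R] (x y : ℕ → R) (s c : R)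
    (hx0 : x 0 = s) (hy0 : y 0 = c) (hx1 : x 1 = 1) (hy1 : y 1 = 0)
    (hx2 : x 2 = s) (hy2 : y 2 = -c) (hx3 : x 3 = 2 * s ^ 2 - 1) (hy3 : y 3 = -(2 * s * c)) :
    Matrix.det !![x 1, y 1, x 1 + y 1 - 1, 1;
                  x 2, y 2, -x 2 + y 2 + 1, 1;
                  x 0, y 0, x 0 - y 0 + 1, 1;
                  x 3, y 3, -x 3 - y 3 - 1, 1]
      = 4 * c * (1 - s) * ((1 + 2 * s) * c - (1 + s)) := by
  simp [Matrix.det_succ_row_zero, Fin.sum_univ_succ, Fin.succAbove, hx0, hy0, hx1, hy1, hx2, hy2,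
    hx3, hy3]
  ring

lemma Real.sin_pi_div_ten : sin (π / 10) = (√5 - 1) / 4 := by
  have hr : √5 ^ 2 = 5 := sq_sqrt (by norm_num)
  have hsin_sq : sin (π / 10) ^ 2 = ((√5 - 1) / 4) ^ 2 := by
    have h := cos_pi_div_five
    rw [show π / 5 = 2 * (π / 10) by ring, cos_two_mul_eq_one_sub] at h
    linear_combination (-1 / 2) * h - hr / 16
  have hsin_nonneg : 0 ≤ sin (π / 10) :=
    sin_nonneg_of_nonneg_of_le_pi (by positivity) (by linarith [pi_pos])
  have hr_ge_one : 1 ≤ √5 := by nlinarith [sqrt_nonneg 5]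
  exact (pow_left_inj₀ hsin_nonneg (by linarith) two_ne_zero).mp hsin_sq

lemma Real.cos_pi_div_ten_sq : cos (π / 10) ^ 2 = (5 + √5) / 8 := by
  have hr : √5 ^ 2 = 5 := sq_sqrt (by norm_num)
  rw [cos_sq', sin_pi_div_ten]
  linear_combination (-1 / 16) * hr

lemma Real.sqrt_five_mul_two_mul_sqrt_five_add_five :
    √(5 * (2 * √5 + 5)) = (5 + √5) * cos (π / 10) := by
  have hr : √5 ^ 2 = 5 := sq_sqrt (by norm_num)
  have hcos_nonneg : 0 ≤ cos (π / 10) :=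
    cos_nonneg_of_mem_Icc ⟨by linarith [pi_pos], by linarith [pi_pos]⟩
  rw [← sqrt_sq (by positivity : 0 ≤ (5 + √5) * cos (π / 10)), mul_pow, cos_pi_div_ten_sq]
  congr 1
  linear_combination (-(15 + √5) / 8) * hr

lemma Real.sin_thirteen_pi_div_ten : sin (13 * π / 10) = 2 * sin (π / 10) ^ 2 - 1 := by
  rw [show 13 * π / 10 = π - 2 * (π / 10) + π / 2 by ring, sin_add_pi_div_two, cos_pi_sub,
    cos_two_mul_eq_one_sub]
  ring

lemma Real.cos_thirteen_pi_div_ten : cos (13 * π / 10) = -(2 * sin (π / 10) * cos (π / 10)) := by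
  rw [show 13 * π / 10 = π - 2 * (π / 10) + π / 2 by ring, cos_add_pi_div_two, sin_pi_sub,
    sin_two_mul]

lemma five_mul_sqrt_five_sub_two_mul_sqrt_add_five_pos :
    0 < 5 * √5 - 2 * √(5 * (2 * √5 + 5)) + 5 := by
  have hr : √5 ^ 2 = 5 := sq_sqrt (by norm_num)
  have hlt : √(5 * (2 * √5 + 5)) < (5 * √5 + 5) / 2 := by
    rw [sqrt_lt' (by positivity)]
    nlinarith
  linarith

/-- The value `V_β` for the case `(a, γ, β, b) = (1, 2, 0, 3)` of the pentagon
construction equals `(1/4)(5√5 − 2√(5(2√5 + 5)) + 5) > 0`. -/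
theorem pentagon_Vbeta_first_case
    (θ x y : ℕ → ℝ)
    (hθ : ∀ n, θ n = 2 * Real.pi * ((n : ℝ) / 5 + 1 / 20))
    (hx : ∀ n, x n = Real.sin (θ n))
    (hy : ∀ n, y n = Real.cos (θ n)) :
    Matrix.det !![x 1, y 1, x 1 + y 1 - 1, 1;
                  x 2, y 2, -x 2 + y 2 + 1, 1;
                  x 0, y 0, x 0 - y 0 + 1, 1;
                  x 3, y 3, -x 3 - y 3 - 1, 1]
      = 1 / 4 * (5 * Real.sqrt 5 - 2 * Real.sqrt (5 * (2 * Real.sqrt 5 + 5)) + 5) ∧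
    0 < 1 / 4 * (5 * Real.sqrt 5 - 2 * Real.sqrt (5 * (2 * Real.sqrt 5 + 5)) + 5) := by
  have hθ0 : θ 0 = π / 10 := by rw [hθ]; push_cast; ring
  have hθ1 : θ 1 = π / 2 := by rw [hθ]; push_cast; ring
  have hθ2 : θ 2 = π - π / 10 := by rw [hθ]; push_cast; ring
  have hθ3 : θ 3 = 13 * π / 10 := by rw [hθ]; push_cast; ring
  refine ⟨?_, by linarith [five_mul_sqrt_five_sub_two_mul_sqrt_add_five_pos]⟩
  rw [det_pentagon_matrix x y (sin (π / 10)) (cos (π / 10))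
      (by rw [hx, hθ0]) (by rw [hy, hθ0]) (by rw [hx, hθ1, sin_pi_div_two])
      (by rw [hy, hθ1, cos_pi_div_two]) (by rw [hx, hθ2, sin_pi_sub])
      (by rw [hy, hθ2, cos_pi_sub]) (by rw [hx, hθ3, sin_thirteen_pi_div_ten])
      (by rw [hy, hθ3, cos_thirteen_pi_div_ten]),
    sqrt_five_mul_two_mul_sqrt_five_add_five, sin_pi_div_ten]
  have hr : √5 ^ 2 = 5 := sq_sqrt (by norm_num)
  linear_combination (2 * √5) * cos_pi_div_ten_sq
    + ((1 + cos (π / 10) - 2 * cos (π / 10) ^ 2) / 4) * hr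
end

section
/- Let θ_n = 2π(n/5 + 1/20) for n ∈ {0,1,2,3,4}, and set x_n = sin(θ_n + 3π/10), y_n = cos θ_n. Then the determinant of the 4×4 matrix with rows (x_0, y_0, x_0 + y_0 − 1, 1), (x_1, y_1, −x_1 + y_1 + 1, 1), (x_3, y_3, x_3 − y_3 + 1, 1), (x_2, y_2, −x_2 − y_2 − 1, 1) equals (5/8)(3√(10 − 2√5) − 2√5 − 2), which is strictly positive. -/
/-!
The five Bloch vectors are the vertices of a regular pentagon, so each of the eight coordinates
in the matrix is `0`, `±sin (π / 5)` or `±sin (2π / 5)`. With `s = sin (π / 5)`, `c = cos (π / 5)`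
and `sin (2π / 5) = 2 s c`, the determinant is a polynomial in `s, c` that reduces to
`15/2 s - 5 c` modulo `s² + c² = 1` and `4 c² - 2 c - 1 = 0`; the radicals in the claimed
value are `√(10 - 2√5) = 4 s` and `√5 = 4 c - 1`. Positivity comes down to `13 √5 < 33`.
-/

open Real

theorem pentagon_coords {θ x y : ℕ → ℝ}
    (hθ : ∀ n, θ n = 2 * π * ((n : ℝ) / 5 + 1 / 20))
    (hx : ∀ n, x n = sin (θ n + 3 * π / 10))
    (hy : ∀ n, y n = cos (θ n)) :
    x 0 = sin (2 * π / 5) ∧ y 0 = sin (2 * π / 5) ∧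
    x 1 = sin (π / 5) ∧ y 1 = 0 ∧
    x 2 = -sin (π / 5) ∧ y 2 = -sin (2 * π / 5) ∧
    x 3 = -sin (2 * π / 5) ∧ y 3 = -sin (π / 5) := by
  simp only [hx, hy, hθ]
  push_cast
  refine ⟨?_, ?_, ?_, ?_, ?_, ?_, ?_, ?_⟩
  · congr 1; ring
  · rw [← sin_pi_div_two_sub]; congr 1; ring
  · rw [← sin_pi_sub]; congr 1; ring
  · rw [← cos_pi_div_two]; congr 1; ring
  · rw [← sin_add_pi]; congr 1; ring
  · rw [← cos_add_pi_div_two]; congr 1; ring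
  · rw [← sin_two_pi_sub]; congr 1; ring
  · rw [← sin_pi_sub, ← cos_add_pi_div_two]; congr 1; ring

theorem det_pentagon_matrix_s18 (u v : ℝ) :
    Matrix.det !![v, v, v + v - 1, 1;
                  u, 0, -u + 0 + 1, 1;
                  -v, -u, -v - -u + 1, 1;
                  -u, -v, - -u - -v - 1, 1]
      = 2 * v ^ 3 + 10 * u * v ^ 2 - 8 * u ^ 2 * v - 4 * v ^ 2 + 2 * u ^ 2 - 2 * u * v := by
  simp [Matrix.det_succ_row_zero, Fin.sum_univ_succ, Fin.succAbove]
  ring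

theorem pentagon_poly_reduce {u c v : ℝ} (hu : u ^ 2 + c ^ 2 = 1)
    (hc : 4 * c ^ 2 - 2 * c - 1 = 0) (hv : v = 2 * u * c) :
    2 * v ^ 3 + 10 * u * v ^ 2 - 8 * u ^ 2 * v - 4 * v ^ 2 + 2 * u ^ 2 - 2 * u * v
      = 15 / 2 * u - 5 * c := by
  subst hv
  linear_combination (u * (16 * c ^ 3 + 40 * c ^ 2 - 16 * c) + (2 - 4 * c - 16 * c ^ 2)) * hu
    + (u * (15 / 2 + c - 12 * c ^ 2 - 4 * c ^ 3) + (-2 + 3 * c + 4 * c ^ 2)) * hc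

theorem sqrt_five_eq_four_mul_cos_sub_one : √5 = 4 * cos (π / 5) - 1 := by
  rw [cos_pi_div_five]; ring

theorem sqrt_ten_sub_two_mul_sqrt_five : √(10 - 2 * √5) = 4 * sin (π / 5) := by
  have hsin : 0 ≤ sin (π / 5) :=
    sin_nonneg_of_nonneg_of_le_pi (by positivity) (by linarith [pi_pos])
  rw [← sqrt_sq (by positivity : 0 ≤ 4 * sin (π / 5)), mul_pow, sin_sq, cos_pi_div_five]
  congr 1
  ring_nf
  rw [sq_sqrt (by norm_num : (0 : ℝ) ≤ 5)]
  ring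

theorem two_mul_sqrt_five_add_two_lt : 2 * √5 + 2 < 3 * √(10 - 2 * √5) := by
  have h5 : √5 ^ 2 = 5 := sq_sqrt (by norm_num)
  have h5lt : √5 < 33 / 13 := by
    rw [sqrt_lt' (by norm_num)]; norm_num
  rw [← div_lt_iff₀' (by norm_num), lt_sqrt (by positivity)]
  nlinarith

/-- The value `V_α` for the most difficult case `(a, γ, α, b) = (0, 1, 3, 2)` of the
pentagon construction, using the measurement at angle `3π/10` in place of Pauli X, equals
`(5/8)(3√(10 − 2√5) − 2√5 − 2) > 0`. -/
theorem pentagon_Valpha_difficult_case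
    (θ x y : ℕ → ℝ)
    (hθ : ∀ n, θ n = 2 * Real.pi * ((n : ℝ) / 5 + 1 / 20))
    (hx : ∀ n, x n = Real.sin (θ n + 3 * Real.pi / 10))
    (hy : ∀ n, y n = Real.cos (θ n)) :
    Matrix.det !![x 0, y 0, x 0 + y 0 - 1, 1;
                  x 1, y 1, -x 1 + y 1 + 1, 1;
                  x 3, y 3, x 3 - y 3 + 1, 1;
                  x 2, y 2, -x 2 - y 2 - 1, 1]
      = 5 / 8 * (3 * Real.sqrt (10 - 2 * Real.sqrt 5) - 2 * Real.sqrt 5 - 2) ∧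
    0 < 5 / 8 * (3 * Real.sqrt (10 - 2 * Real.sqrt 5) - 2 * Real.sqrt 5 - 2) := by
  refine ⟨?_, by linarith [two_mul_sqrt_five_add_two_lt]⟩
  obtain ⟨hx0, hy0, hx1, hy1, hx2, hy2, hx3, hy3⟩ := pentagon_coords hθ hx hy
  have hsin_double : sin (2 * π / 5) = 2 * sin (π / 5) * cos (π / 5) := by
    rw [← sin_two_mul]; ring_nf
  rw [hx0, hy0, hx1, hy1, hx2, hy2, hx3, hy3, det_pentagon_matrix_s18,
    sqrt_ten_sub_two_mul_sqrt_five, sqrt_five_eq_four_mul_cos_sub_one]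
  linear_combination pentagon_poly_reduce (sin_sq_add_cos_sq (π / 5))
    quadratic_root_cos_pi_div_five hsin_double
end
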